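/- Let n be odd and consider the game on the characteristic cycle V. Fix a position after Alice's turn where V = T_1 R_1 T_2 R_2 with T_1, T_2 arcs of taken slices, l(T_1) = l(T_2)+1, and R_1, R_2 the arcs of remaining slices with l(R_1) = l(R_2). If Bob takes the last slice of R_1 and both players thereafter make only shifts by Bob (Bob makes only shifts), then regardless of Alice's remaining turns, Bob ends up taking all of R_1 and Alice all of R_2; symmetrically if Bob takes the first slice of R_2, Bob takes all of R_2 and Alice all of R_1. -/

import Mathlib

/-- Adjacency of slices on the circular pizza with `n` slices. -/
def adj (n : ℕ) (i j : Fin n) : Prop :=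
  (i.1 + 1) % n = j.1 ∨ (j.1 + 1) % n = i.1

instance (n : ℕ) (i j : Fin n) : Decidable (adj n i j) := by
  unfold adj; infer_instance

/-- `h` lists the slices taken so far, in the order they were taken.
It is a valid (partial) play of the Polite Pizza Protocol if no slice is taken
twice and every slice except the first is adjacent to a previously taken one. -/
def ValidHist (n : ℕ) (h : List (Fin n)) : Prop :=
  h.Nodup ∧ ∀ (k : ℕ) (hk : k < h.length), 0 < k →
    ∃ (j : ℕ) (hj : j < k), adj n (h.get ⟨k, hk⟩) (h.get ⟨j, hj.trans hk⟩)

/-- `m` is a legal next slice after history `h`. -/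
def ValidMove (n : ℕ) (h : List (Fin n)) (m : Fin n) : Prop :=
  m ∉ h ∧ (h = [] ∨ ∃ x ∈ h, adj n m x)

/-- Total size of the slices taken at (0-based) turns satisfying `f`. -/
def gainOn (n : ℕ) (P : Fin n → ℝ) (f : ℕ → Bool) (l : List (Fin n)) : ℝ :=
  (((l.zipIdx.map (fun p => (p.2, p.1))).filter (fun p => f p.1)).map (fun p => P p.2)).sum

/-- Alice moves at even turns (0-based), Bob at odd turns. -/
def isAlice (k : ℕ) : Bool := k % 2 == 0
def isBob (k : ℕ) : Bool := k % 2 == 1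

def aliceGain (n : ℕ) (P : Fin n → ℝ) (l : List (Fin n)) : ℝ := gainOn n P isAlice l
def bobGain (n : ℕ) (P : Fin n → ℝ) (l : List (Fin n)) : ℝ := gainOn n P isBob l

/-- The play `l` is consistent with the strategy `s` used at the turns satisfying `f`. -/
def Consistent (n : ℕ) (f : ℕ → Bool) (s : List (Fin n) → Fin n) (l : List (Fin n)) : Prop :=
  ∀ (k : ℕ) (hk : k < l.length), f k → l.get ⟨k, hk⟩ = s (l.take k)

/-- The strategy `s`, used at turns satisfying `f`, always produces legal moves. -/
def Legal (n : ℕ) (f : ℕ → Bool) (s : List (Fin n) → Fin n) : Prop :=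
  ∀ h, ValidHist n h → h.length < n → f h.length → ValidMove n h (s h)

/-- Number of jumps made at turns satisfying `f` during the play `l`:
turn `k ≥ 1` is a jump if the slice taken is not adjacent to the one taken at turn `k-1`. -/
def jumpCount (n : ℕ) (f : ℕ → Bool) (l : List (Fin n)) : ℕ :=
  ((((l.zip l.tail).zipIdx.map (fun p => (p.2, p.1)))).filter
    (fun p => f (p.1 + 1) && !(decide (adj n p.2.2 p.2.1)))).length

/-- Alice has a strategy making at most `j` jumps and guaranteeing her
slices of total size at least `g`. -/
def AliceJGain (n : ℕ) (P : Fin n → ℝ) (j : ℕ) (g : ℝ) : Prop :=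
  ∃ s : List (Fin n) → Fin n, Legal n isAlice s ∧
    ∀ l : List (Fin n), ValidHist n l → l.length = n → Consistent n isAlice s l →
      g ≤ aliceGain n P l ∧ jumpCount n isAlice l ≤ j

/-- Alice has a strategy guaranteeing her slices of total size at least `g`. -/
def AliceGain' (n : ℕ) (P : Fin n → ℝ) (g : ℝ) : Prop :=
  ∃ s : List (Fin n) → Fin n, Legal n isAlice s ∧
    ∀ l : List (Fin n), ValidHist n l → l.length = n → Consistent n isAlice s l →
      g ≤ aliceGain n P l

/-- Bob (moving second) has a strategy guaranteeing him slices of total size at least `g`. -/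
def BobGain' (n : ℕ) (P : Fin n → ℝ) (g : ℝ) : Prop :=
  ∃ s : List (Fin n) → Fin n, Legal n isBob s ∧
    ∀ l : List (Fin n), ValidHist n l → l.length = n → Consistent n isBob s l →
      g ≤ bobGain n P l

open Fin.NatCast

/-!
After Alice's turn the untaken slices form an arc, and they keep forming one: a legal move
is adjacent to a taken slice, so it removes an end of the arc. With offsets counted from the
start `i` of the arc, Bob always takes the end whose offset has parity `par`. When Bob moves
the arc has even length, so exactly one end qualifies, and Alice is left an odd arc both of
whose ends have the other parity. Whichever end Alice takes, the slice next to it becomes an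
end of parity `par`, so Bob's next move is a shift.
-/

theorem ValidHist.validMove_getElem_take {n : ℕ} {l : List (Fin n)} (hl : ValidHist n l) {t : ℕ}
    (ht : t < l.length) : ValidMove n (l.take t) l[t] := by
  refine ⟨fun hmem => ?_, ?_⟩
  · obtain ⟨s, hs, hst⟩ := List.getElem_of_mem hmem
    simp only [List.getElem_take, List.length_take] at hs hst
    have := (List.Nodup.getElem_inj_iff hl.1).mp hst
    omega
  · rcases Nat.eq_zero_or_pos t with rfl | ht0
    · exact Or.inl List.take_zero
    · obtain ⟨s, hs, hadj⟩ := hl.2 t ht ht0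
      refine Or.inr ⟨l[s], List.mem_iff_getElem.mpr ⟨s, ?_, List.getElem_take⟩, hadj⟩
      rw [List.length_take]; omega

theorem ValidHist.length_le {n : ℕ} {l : List (Fin n)} (hl : ValidHist n l) : l.length ≤ n := by
  simpa using hl.1.length_le_card

theorem List.take_ne_nil_of_prefix {α : Type*} {h l : List α} (hne : h ≠ []) (hhl : h <+: l)
    {t : ℕ} (ht : h.length ≤ t) : l.take t ≠ [] := by
  have := List.length_pos_iff.mpr hne
  have := hhl.length_le
  exact List.ne_nil_of_length_pos (by simp only [List.length_take]; omega)

section Slices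

variable {n : ℕ} [NeZero n]

theorem adj_iff_eq_add_one {u v : Fin n} : adj n u v ↔ v = u + 1 ∨ u = v + 1 := by
  simp only [adj, Fin.ext_iff, Fin.val_add, Fin.val_one', Nat.add_mod_mod, eq_comm]

theorem add_natCast_succ (i : Fin n) (k : ℕ) : i + ((k + 1 : ℕ) : Fin n) = i + k + 1 := by
  rw [Nat.cast_succ, add_assoc]

theorem eq_of_add_natCast_eq {i : Fin n} {a k k' : ℕ} (h : i + (k : Fin n) = i + k')
    (hk : a ≤ k ∧ k < a + n) (hk' : a ≤ k' ∧ k' < a + n) : k = k' := by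
  have hmod : a + (k - a) ≡ a + (k' - a) [MOD n] := by
    simpa [Nat.ModEq, Fin.ext_iff, Fin.val_natCast, Nat.add_sub_cancel' hk.1,
      Nat.add_sub_cancel' hk'.1] using h
  have := Nat.ModEq.add_left_cancel' a hmod
  rw [Nat.ModEq, Nat.mod_eq_of_lt (by omega), Nat.mod_eq_of_lt (by omega)] at this
  omega

end Slices

def IsRemainingArc {n : ℕ} [NeZero n] (i : Fin n) (p : List (Fin n)) (a r : ℕ) : Prop :=
  a + r ≤ n ∧ ∀ m, m ∉ p ↔ ∃ k, a ≤ k ∧ k < a + r ∧ m = i + k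

namespace IsRemainingArc

variable {n : ℕ} [NeZero n] {i : Fin n} {p : List (Fin n)} {a r : ℕ}

theorem add_natCast_notMem (hp : IsRemainingArc i p a r) {k : ℕ} (hak : a ≤ k)
    (hk : k < a + r) : i + (k : Fin n) ∉ p :=
  (hp.2 _).mpr ⟨k, hak, hk, rfl⟩

theorem add_natCast_mem (hp : IsRemainingArc i p a r) {k : ℕ} (hk : a + r ≤ k)
    (hk' : k < a + n) : i + (k : Fin n) ∈ p := by
  by_contra hnot
  obtain ⟨k', hak', hk'r, he⟩ := (hp.2 _).mp hnot
  have := eq_of_add_natCast_eq he ⟨by omega, hk'⟩ ⟨hak', by omega⟩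
  omega

theorem lt_of_ne_nil (hp : IsRemainingArc i p a r) (hne : p ≠ []) : r < n := by
  obtain ⟨x, hx⟩ := List.exists_mem_of_ne_nil p hne
  by_contra hr
  have := hp.1
  have hx' := hp.add_natCast_notMem (k := (x - i).val) (by omega) (by omega)
  rw [Fin.cast_val_eq_self, add_sub_cancel] at hx'
  exact hx' hx

theorem validMove_low (hp : IsRemainingArc i p a (r + 1)) : ValidMove n p (i + a) := by
  refine ⟨hp.add_natCast_notMem le_rfl (by omega), or_iff_not_imp_left.mpr fun hne => ?_⟩
  have hr := hp.lt_of_ne_nil hne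
  refine ⟨i + ((a + n - 1 : ℕ) : Fin n), hp.add_natCast_mem (by omega) (by omega), ?_⟩
  refine adj_iff_eq_add_one.mpr (Or.inr ?_)
  rw [← add_natCast_succ, Nat.sub_add_cancel (by omega), Nat.cast_add, Fin.natCast_self,
    add_zero]

theorem validMove_high (hp : IsRemainingArc i p a (r + 1)) :
    ValidMove n p (i + (a + r : ℕ)) := by
  refine ⟨hp.add_natCast_notMem (by omega) (by omega), or_iff_not_imp_left.mpr fun hne => ?_⟩
  have hr := hp.lt_of_ne_nil hne
  refine ⟨i + ((a + r + 1 : ℕ) : Fin n), hp.add_natCast_mem (by omega) (by omega), ?_⟩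
  exact adj_iff_eq_add_one.mpr (Or.inl (add_natCast_succ _ _))

theorem append_low (hp : IsRemainingArc i p a (r + 1)) :
    IsRemainingArc i (p ++ [i + a]) (a + 1) r := by
  have := hp.1
  refine ⟨by omega, fun m => ?_⟩
  simp only [List.mem_append, List.mem_singleton, not_or, hp.2]
  constructor
  · rintro ⟨⟨k, hak, hk, rfl⟩, hne⟩
    refine ⟨k, ?_, by omega, rfl⟩
    by_contra hka
    exact hne (by rw [show k = a by omega])
  · rintro ⟨k, hak, hk, rfl⟩
    refine ⟨⟨k, by omega, by omega, rfl⟩, fun he => ?_⟩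
    have := eq_of_add_natCast_eq he (a := 0) ⟨by omega, by omega⟩ ⟨by omega, by omega⟩
    omega

theorem append_high (hp : IsRemainingArc i p a (r + 1)) :
    IsRemainingArc i (p ++ [i + (a + r : ℕ)]) a r := by
  have := hp.1
  refine ⟨by omega, fun m => ?_⟩
  simp only [List.mem_append, List.mem_singleton, not_or, hp.2]
  constructor
  · rintro ⟨⟨k, hak, hk, rfl⟩, hne⟩
    refine ⟨k, hak, ?_, rfl⟩
    by_contra hka
    exact hne (by rw [show k = a + r by omega])
  · rintro ⟨k, hak, hk, rfl⟩
    refine ⟨⟨k, hak, by omega, rfl⟩, fun he => ?_⟩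
    have := eq_of_add_natCast_eq he (a := 0) ⟨by omega, by omega⟩ ⟨by omega, by omega⟩
    omega

theorem eq_low_or_eq_high (hp : IsRemainingArc i p a (r + 1)) {m : Fin n}
    (hm : ValidMove n p m) (hne : p ≠ []) : m = i + a ∨ m = i + (a + r : ℕ) := by
  obtain ⟨k, hak, hk, rfl⟩ := (hp.2 m).mp hm.1
  obtain ⟨x, hx, hadj⟩ := hm.2.resolve_left hne
  by_contra hend
  have hka : a < k := lt_of_le_of_ne hak fun h => hend (Or.inl (by rw [h]))
  have hkr : k < a + r := lt_of_le_of_ne (by omega) fun h => hend (Or.inr (by rw [h]))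
  rcases adj_iff_eq_add_one.mp hadj with rfl | hx1
  · exact hp.add_natCast_notMem (k := k + 1) (by omega) (by omega) (by rwa [add_natCast_succ])
  · have : x = i + ((k - 1 : ℕ) : Fin n) :=
      add_right_cancel (b := 1)
        (by rw [← hx1, ← add_natCast_succ, Nat.sub_add_cancel (by omega)])
    exact hp.add_natCast_notMem (k := k - 1) (by omega) (by omega) (this ▸ hx)

theorem append_of_validMove (hp : IsRemainingArc i p a (r + 1)) {m : Fin n}
    (hm : ValidMove n p m) (hne : p ≠ []) : ∃ a', IsRemainingArc i (p ++ [m]) a' r := by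
  rcases hp.eq_low_or_eq_high hm hne with rfl | rfl
  exacts [⟨_, hp.append_low⟩, ⟨_, hp.append_high⟩]

theorem exists_take {h l : List (Fin n)} {a₀ : ℕ}
    (harc : IsRemainingArc i h a₀ (n - h.length)) (hne : h ≠ []) (hl : ValidHist n l)
    (hhl : h <+: l) {t : ℕ} (ht : h.length ≤ t) (htl : t ≤ l.length) :
    ∃ a, IsRemainingArc i (l.take t) a (n - t) := by
  induction t, ht using Nat.le_induction with
  | base => exact ⟨a₀, List.prefix_iff_eq_take.mp hhl ▸ harc⟩
  | succ t ht ih =>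
    obtain ⟨a, hp⟩ := ih (by omega)
    rw [show n - t = n - (t + 1) + 1 by have := hl.length_le; omega] at hp
    rw [← List.take_concat_get' l t (by omega)]
    exact hp.append_of_validMove (hl.validMove_getElem_take _)
      (List.take_ne_nil_of_prefix hne hhl ht)

end IsRemainingArc

/-- Bob takes the end of the remaining arc (its least or greatest untaken offset from `i`)
whose offset has parity `par`. -/
def parityStrategy {n : ℕ} [NeZero n] (i : Fin n) (par : ℕ) (p : List (Fin n)) : Fin n :=
  let K := (Finset.range n).filter fun k : ℕ => i + (k : Fin n) ∉ p
  if hK : K.Nonempty then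
    if K.min' hK % 2 = par then i + (K.min' hK : Fin n) else i + (K.max' hK : Fin n)
  else i

section ParityStrategy

variable {n : ℕ} [NeZero n] {i : Fin n} {p : List (Fin n)} {a r par : ℕ}

theorem IsRemainingArc.parityStrategy_eq (hp : IsRemainingArc i p a (r + 1)) :
    parityStrategy i par p = if a % 2 = par then i + a else i + (a + r : ℕ) := by
  have hK : (Finset.range n).filter (fun k : ℕ => i + (k : Fin n) ∉ p) =
      Finset.Ico a (a + r + 1) := by
    ext k
    simp only [Finset.mem_filter, Finset.mem_range, Finset.mem_Ico, hp.2]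
    have := hp.1
    constructor
    · rintro ⟨hk, k', hak', hk', he⟩
      have := eq_of_add_natCast_eq he (a := 0) ⟨by omega, by omega⟩ ⟨by omega, by omega⟩
      omega
    · rintro ⟨hak, hk⟩
      exact ⟨by omega, k, hak, hk, rfl⟩
  have hne : (Finset.Ico a (a + r + 1)).Nonempty := Finset.nonempty_Ico.mpr (by omega)
  have hmin : (Finset.Ico a (a + r + 1)).min' hne = a :=
    (Finset.min'_eq_iff _ _ _).mpr ⟨by simp, fun b hb => (Finset.mem_Ico.mp hb).1⟩
  have hmax : (Finset.Ico a (a + r + 1)).max' hne = a + r :=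
    (Finset.max'_eq_iff _ _ _).mpr ⟨by simp, fun b hb => by rw [Finset.mem_Ico] at hb; omega⟩
  simp only [parityStrategy, hK, dif_pos hne, hmin, hmax]

theorem IsRemainingArc.parityStrategy_eq_add (hpar : par < 2)
    (hp : IsRemainingArc i p a (r + 1)) (hr : r % 2 = 1) :
    ∃ e, a ≤ e ∧ e ≤ a + r ∧ e % 2 = par ∧ parityStrategy i par p = i + e := by
  rw [hp.parityStrategy_eq]
  split_ifs with ha
  exacts [⟨a, le_rfl, by omega, ha, rfl⟩, ⟨a + r, by omega, le_rfl, by omega, rfl⟩]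

theorem IsRemainingArc.append_parityStrategy (hp : IsRemainingArc i p a (r + 1)) :
    ∃ a', a' % 2 ≠ par ∧ IsRemainingArc i (p ++ [parityStrategy i par p]) a' r := by
  rw [hp.parityStrategy_eq]
  split_ifs with ha
  exacts [⟨a + 1, by omega, hp.append_low⟩, ⟨a, ha, hp.append_high⟩]

theorem IsRemainingArc.adj_parityStrategy_append (hpar : par < 2)
    (hp : IsRemainingArc i p a (r + 2)) (ha : a % 2 ≠ par) {m : Fin n} (hm : ValidMove n p m)
    (hne : p ≠ []) : adj n (parityStrategy i par (p ++ [m])) m := by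
  rcases hp.eq_low_or_eq_high hm hne with rfl | rfl
  · rw [hp.append_low.parityStrategy_eq, if_pos (by omega), add_natCast_succ]
    exact adj_iff_eq_add_one.mpr (Or.inr rfl)
  · rw [hp.append_high.parityStrategy_eq, if_neg ha, ← add_assoc, add_natCast_succ]
    exact adj_iff_eq_add_one.mpr (Or.inl rfl)

theorem IsRemainingArc.validMove_parityStrategy {h h' : List (Fin n)} {a₀ : ℕ}
    (harc : IsRemainingArc i h a₀ (n - h.length)) (hne : h ≠ []) (hh' : ValidHist n h')
    (hlt : h'.length < n) (hhh' : h <+: h') : ValidMove n h' (parityStrategy i par h') := by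
  obtain ⟨a, hp⟩ := harc.exists_take hne hh' hhh' hhh'.length_le le_rfl
  rw [List.take_length, show n - h'.length = n - h'.length - 1 + 1 by omega] at hp
  rw [hp.parityStrategy_eq]
  split_ifs
  exacts [hp.validMove_low, hp.validMove_high]

end ParityStrategy

section Play

variable {n : ℕ} [NeZero n] {i : Fin n} {h l : List (Fin n)} {a₀ par : ℕ}

theorem exists_isRemainingArc_take_of_even (harc : IsRemainingArc i h a₀ (n - h.length))
    (hne : h ≠ []) (hl : ValidHist n l) (hhl : h <+: l)
    (hcons : ∀ (k : ℕ) (hk : k < l.length), k % 2 = 1 → h.length ≤ k →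
      l[k] = parityStrategy i par (l.take k))
    {t : ℕ} (hte : t % 2 = 0) (ht : h.length < t) (htl : t ≤ l.length) :
    ∃ a, a % 2 ≠ par ∧ IsRemainingArc i (l.take t) a (n - t) := by
  obtain ⟨a, hp⟩ := harc.exists_take hne hl hhl (t := t - 1) (by omega) (by omega)
  rw [show n - (t - 1) = n - t + 1 by have := hl.length_le; omega] at hp
  obtain ⟨a', ha', hp'⟩ := hp.append_parityStrategy
  refine ⟨a', ha', ?_⟩
  rwa [← hcons (t - 1) (by omega) (by omega) (by omega), List.take_concat_get',
    Nat.sub_add_cancel (by omega)] at hp'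

theorem adj_getElem_of_odd (hpar : par < 2) (harc : IsRemainingArc i h a₀ (n - h.length))
    (hodd : h.length % 2 = 1) (hl : ValidHist n l) (hhl : h <+: l)
    (hcons : ∀ (k : ℕ) (hk : k < l.length), k % 2 = 1 → h.length ≤ k →
      l[k] = parityStrategy i par (l.take k))
    {t : ℕ} (hto : t % 2 = 1) (ht : h.length < t) (htl : t < l.length) :
    adj n l[t] l[t - 1] := by
  have hne : h ≠ [] := List.ne_nil_of_length_pos (by omega)
  obtain ⟨a, ha, hp⟩ :=
    exists_isRemainingArc_take_of_even harc hne hl hhl hcons (t := t - 1) (by omega) (by omega)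
      (by omega)
  rw [show n - (t - 1) = n - t - 1 + 2 by have := hl.length_le; omega] at hp
  have := hp.adj_parityStrategy_append hpar ha (hl.validMove_getElem_take (t := t - 1) (by omega))
    (List.take_ne_nil_of_prefix hne hhl (by omega))
  rwa [List.take_concat_get', Nat.sub_add_cancel (by omega), ← hcons t htl hto ht.le] at this

theorem mod_two_eq_of_odd_of_getElem_eq (hpar : par < 2) (hn : n % 2 = 1)
    (harc : IsRemainingArc i h a₀ (n - h.length)) (hne : h ≠ []) (hl : ValidHist n l)
    (hhl : h <+: l)
    (hcons : ∀ (k : ℕ) (hk : k < l.length), k % 2 = 1 → h.length ≤ k →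
      l[k] = parityStrategy i par (l.take k))
    {t : ℕ} (hto : t % 2 = 1) (ht : h.length ≤ t) (htl : t < l.length) {k : ℕ} (hk : k < n)
    (hlk : l[t] = i + k) : k % 2 = par := by
  have := hl.length_le
  obtain ⟨a, hp⟩ := harc.exists_take hne hl hhl ht htl.le
  rw [show n - t = n - t - 1 + 1 by omega] at hp
  obtain ⟨e, -, her, he, hse⟩ := hp.parityStrategy_eq_add hpar (by omega)
  rw [hcons t htl hto ht, hse] at hlk
  have := hp.1
  have := eq_of_add_natCast_eq hlk (a := 0) ⟨by omega, by omega⟩ ⟨by omega, by omega⟩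
  omega

theorem mod_two_ne_of_even_of_getElem_eq (hn : n % 2 = 1)
    (harc : IsRemainingArc i h a₀ (n - h.length)) (hodd : h.length % 2 = 1) (hl : ValidHist n l)
    (hhl : h <+: l)
    (hcons : ∀ (k : ℕ) (hk : k < l.length), k % 2 = 1 → h.length ≤ k →
      l[k] = parityStrategy i par (l.take k))
    {t : ℕ} (hte : t % 2 = 0) (ht : h.length ≤ t) (htl : t < l.length) {k : ℕ} (hk : k < n)
    (hlk : l[t] = i + k) : k % 2 ≠ par := by
  have hne : h ≠ [] := List.ne_nil_of_length_pos (by omega)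
  obtain ⟨a, ha, hp⟩ :=
    exists_isRemainingArc_take_of_even harc hne hl hhl hcons hte (by omega) htl.le
  have := hl.length_le
  rw [show n - t = n - t - 1 + 1 by omega] at hp
  have := hp.1
  rcases hp.eq_low_or_eq_high (hl.validMove_getElem_take htl)
    (List.take_ne_nil_of_prefix hne hhl ht) with he | he <;>
  · rw [he] at hlk
    have := eq_of_add_natCast_eq hlk (a := 0) ⟨by omega, by omega⟩ ⟨by omega, by omega⟩
    omega

theorem parityStrategy_play_spec (hpar : par < 2) (hn : n % 2 = 1)
    (harc : IsRemainingArc i h 0 (n - h.length)) (hodd : h.length % 2 = 1) (hl : ValidHist n l)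
    (hhl : h <+: l)
    (hcons : ∀ (k : ℕ) (hk : k < l.length), k % 2 = 1 → h.length ≤ k →
      l.get ⟨k, hk⟩ = parityStrategy i par (l.take k)) :
    (∀ (t : ℕ) (ht : t < l.length) (ht' : t - 1 < l.length),
      h.length < t → t % 2 = 1 → adj n (l.get ⟨t, ht⟩) (l.get ⟨t - 1, ht'⟩)) ∧
    (∀ k < n - h.length, ∀ (t : ℕ) (ht : t < l.length),
      l.get ⟨t, ht⟩ = i + ((k : ℕ) : Fin n) → (t % 2 = 1 ↔ k % 2 = par)) := by
  have hne : h ≠ [] := List.ne_nil_of_length_pos (by omega)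
  refine ⟨fun t ht _ hlt hto => adj_getElem_of_odd hpar harc hodd hl hhl hcons hto hlt ht,
    fun k hk t ht hlk => ?_⟩
  rcases lt_or_ge t h.length with hth | hth
  · have hmem : l[t] ∈ h := by
      rw [List.prefix_iff_eq_take.mp hhl]
      exact List.mem_iff_getElem.mpr ⟨t, by rw [List.length_take]; omega, List.getElem_take⟩
    exact absurd (hlk ▸ hmem) (harc.add_natCast_notMem (Nat.zero_le k) (by omega))
  rcases Nat.mod_two_eq_zero_or_one t with hte | hto
  · have := mod_two_ne_of_even_of_getElem_eq hn harc hodd hl hhl hcons hte hth ht (by omega) hlk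
    omega
  · have := mod_two_eq_of_odd_of_getElem_eq hpar hn harc hne hl hhl hcons hto hth ht (by omega) hlk
    omega

end Play

/-- In the characteristic cycle, `R1` consists of the remaining slices `i + k` with `k` odd and
`R2` of those with `k` even. -/
theorem bob_shifts_takes_one_remaining_arc_general (n : ℕ) [NeZero n]
    (h : List (Fin n)) (hodd : h.length % 2 = 1)
    (j : ℕ) (hj : 1 ≤ j) (hlen : h.length + 2 * j = n)
    (i : Fin n)
    (hrem : ∀ m : Fin n, m ∉ h ↔ ∃ k < 2 * j, m = i + ((k : ℕ) : Fin n)) :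
    (∃ s : List (Fin n) → Fin n,
      (∀ h', ValidHist n h' → h'.length < n → h'.length % 2 = 1 → h <+: h' →
        ValidMove n h' (s h')) ∧
      s h = i + (((2 * j - 1 : ℕ)) : Fin n) ∧
      ∀ l : List (Fin n), ValidHist n l → l.length = n → h <+: l →
        (∀ (k : ℕ) (hk : k < l.length), k % 2 = 1 → h.length ≤ k →
          l.get ⟨k, hk⟩ = s (l.take k)) →
        (∀ (t : ℕ) (ht : t < l.length) (ht' : t - 1 < l.length),
          h.length < t → t % 2 = 1 → adj n (l.get ⟨t, ht⟩) (l.get ⟨t - 1, ht'⟩)) ∧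
        (∀ k < 2 * j, ∀ (t : ℕ) (ht : t < l.length),
          l.get ⟨t, ht⟩ = i + ((k : ℕ) : Fin n) → (t % 2 = 1 ↔ k % 2 = 1))) ∧
    (∃ s : List (Fin n) → Fin n,
      (∀ h', ValidHist n h' → h'.length < n → h'.length % 2 = 1 → h <+: h' →
        ValidMove n h' (s h')) ∧
      s h = i ∧
      ∀ l : List (Fin n), ValidHist n l → l.length = n → h <+: l →
        (∀ (k : ℕ) (hk : k < l.length), k % 2 = 1 → h.length ≤ k →
          l.get ⟨k, hk⟩ = s (l.take k)) →
        (∀ (t : ℕ) (ht : t < l.length) (ht' : t - 1 < l.length),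
          h.length < t → t % 2 = 1 → adj n (l.get ⟨t, ht⟩) (l.get ⟨t - 1, ht'⟩)) ∧
        (∀ k < 2 * j, ∀ (t : ℕ) (ht : t < l.length),
          l.get ⟨t, ht⟩ = i + ((k : ℕ) : Fin n) → (t % 2 = 1 ↔ k % 2 = 0))) := by
  have hn : n % 2 = 1 := by omega
  have hne : h ≠ [] := List.ne_nil_of_length_pos (by omega)
  have h2j : n - h.length = 2 * j := by omega
  have harc : IsRemainingArc i h 0 (n - h.length) :=
    ⟨by omega, fun m => by simp only [hrem m, h2j, Nat.zero_le, zero_add, true_and]⟩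
  have hstart : IsRemainingArc i h 0 (2 * j - 1 + 1) := by
    rwa [Nat.sub_add_cancel (by omega), ← h2j]
  refine ⟨⟨parityStrategy i 1, fun h' hh' hlt _ hhh' =>
      harc.validMove_parityStrategy hne hh' hlt hhh', by simp [hstart.parityStrategy_eq],
      fun l hl _ hhl hcons => ?_⟩,
    ⟨parityStrategy i 0, fun h' hh' hlt _ hhh' =>
      harc.validMove_parityStrategy hne hh' hlt hhh', by simp [hstart.parityStrategy_eq],
      fun l hl _ hhl hcons => ?_⟩⟩
  · exact h2j ▸ parityStrategy_play_spec (by norm_num) hn harc hodd hl hhl hcons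
  · exact h2j ▸ parityStrategy_play_spec (by norm_num) hn harc hodd hl hhl hcons

/-- after Alice\'s turn the remaining slices form an arc of even
length `2j` starting at `i`; in the characteristic cycle they form two arcs
`R1` (odd offsets) and `R2` (even offsets).  If Bob takes the last slice of `R1`
(the slice at offset `2j-1`) and thereafter makes only shifts, then regardless
of Alice\'s play Bob takes exactly the slices of `R1` and Alice those of `R2`;
symmetrically with the first slice of `R2` (offset `0`). -/
theorem bob_shifts_takes_one_remaining_arc (n : ℕ) [NeZero n]
    (P : Fin n → ℝ) (hP : ∀ i, 0 ≤ P i)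
    (h : List (Fin n)) (hh : ValidHist n h) (hodd : h.length % 2 = 1)
    (j : ℕ) (hj : 1 ≤ j) (hlen : h.length + 2 * j = n)
    (i : Fin n)
    (hrem : ∀ m : Fin n, m ∉ h ↔ ∃ k < 2 * j, m = i + ((k : ℕ) : Fin n)) :
    (∃ s : List (Fin n) → Fin n,
      (∀ h', ValidHist n h' → h'.length < n → h'.length % 2 = 1 → h <+: h' →
        ValidMove n h' (s h')) ∧
      s h = i + (((2 * j - 1 : ℕ)) : Fin n) ∧
      ∀ l : List (Fin n), ValidHist n l → l.length = n → h <+: l →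
        (∀ (k : ℕ) (hk : k < l.length), k % 2 = 1 → h.length ≤ k →
          l.get ⟨k, hk⟩ = s (l.take k)) →
        (∀ (t : ℕ) (ht : t < l.length) (ht' : t - 1 < l.length),
          h.length < t → t % 2 = 1 → adj n (l.get ⟨t, ht⟩) (l.get ⟨t - 1, ht'⟩)) ∧
        (∀ k < 2 * j, ∀ (t : ℕ) (ht : t < l.length),
          l.get ⟨t, ht⟩ = i + ((k : ℕ) : Fin n) → (t % 2 = 1 ↔ k % 2 = 1))) ∧
    (∃ s : List (Fin n) → Fin n,
      (∀ h', ValidHist n h' → h'.length < n → h'.length % 2 = 1 → h <+: h' →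
        ValidMove n h' (s h')) ∧
      s h = i ∧
      ∀ l : List (Fin n), ValidHist n l → l.length = n → h <+: l →
        (∀ (k : ℕ) (hk : k < l.length), k % 2 = 1 → h.length ≤ k →
          l.get ⟨k, hk⟩ = s (l.take k)) →
        (∀ (t : ℕ) (ht : t < l.length) (ht' : t - 1 < l.length),
          h.length < t → t % 2 = 1 → adj n (l.get ⟨t, ht⟩) (l.get ⟨t - 1, ht'⟩)) ∧
        (∀ k < 2 * j, ∀ (t : ℕ) (ht : t < l.length),
          l.get ⟨t, ht⟩ = i + ((k : ℕ) : Fin n) → (t % 2 = 1 ↔ k % 2 = 0))) :=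
  bob_shifts_takes_one_remaining_arc_general n h hodd j hj hlen i hrem
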